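/- arXiv:2505.05439 — 7 statements merged into one kernel-verified Lean document; each statement's English description precedes it below -/
import Mathlib

section
/- Let Q0 be a finite nonempty type and let E : Q0 → Q0 → ℤ be any integer matrix; for x, y : Q0 → ℤ write ⟨x, y⟩ := Σ_{i,j} x i * E i j * y j. Let d, δ : Q0 → ℕ be dimension vectors such that for every i ∈ Q0 one has ⟨e_i, δ⟩ < 0 and ⟨δ, e_i⟩ < 0, where e_i is the i-th standard basis vector. Then the sequence n ↦ ⟨d + n·δ, d + n·δ⟩ (n ∈ ℕ) tends to −∞ as n → ∞. -/
/-!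
Expanding bilinearly, `⟨d + nδ, d + nδ⟩` is a quadratic polynomial in `n` with leading
coefficient `⟨δ, δ⟩ = ∑ᵢ δᵢ ⟨eᵢ, δ⟩`. Every `⟨eᵢ, δ⟩` is negative, which forces `δ ≠ 0`
(as `Q0` is nonempty); since `δ ≥ 0`, the leading coefficient is negative.
-/

open Finset Filter

/-- The bilinear (Euler) form associated to an integer matrix `E`. -/
def eulerForm {Q0 : Type*} [Fintype Q0] (E : Q0 → Q0 → ℤ) (x y : Q0 → ℤ) : ℤ :=
  ∑ i, ∑ j, x i * E i j * y j

/-- A dimension vector `Q0 → ℕ` viewed as an integer vector. -/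
def nvec {Q0 : Type*} (v : Q0 → ℕ) : Q0 → ℤ := fun i => (v i : ℤ)

section EulerForm

variable {Q0 : Type*} [Fintype Q0] (E : Q0 → Q0 → ℤ)

theorem eulerForm_eq_sum_mul_single_left [DecidableEq Q0] (x y : Q0 → ℤ) :
    eulerForm E x y = ∑ i, x i * eulerForm E (Pi.single i 1) y := by
  simp [eulerForm, Pi.single_apply, mul_sum, mul_assoc]

theorem eulerForm_neg_of_forall_single_left_neg [DecidableEq Q0] {x y : Q0 → ℤ}
    (hx : 0 ≤ x) (hx0 : x ≠ 0) (hy : ∀ i, eulerForm E (Pi.single i 1) y < 0) :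
    eulerForm E x y < 0 := by
  obtain ⟨j, hj⟩ := Function.ne_iff.mp hx0
  rw [eulerForm_eq_sum_mul_single_left]
  refine Finset.sum_neg' (fun i _ => mul_nonpos_of_nonneg_of_nonpos (hx i) (hy i).le)
    ⟨j, mem_univ j, mul_neg_of_pos_of_neg (lt_of_le_of_ne (hx j) (Ne.symm hj)) (hy j)⟩

theorem eulerForm_add_smul_self (x y : Q0 → ℤ) (t : ℤ) :
    eulerForm E (x + t • y) (x + t • y) =
      eulerForm E x x + t * (eulerForm E x y + eulerForm E y x) + t ^ 2 * eulerForm E y y := by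
  simp only [eulerForm, Pi.add_apply, Pi.smul_apply, smul_eq_mul, mul_sum, ← sum_add_distrib]
  exact sum_congr rfl fun i _ => sum_congr rfl fun j _ => by ring

end EulerForm

theorem tendsto_quadratic_atBot_of_neg {R : Type*} [CommRing R] [LinearOrder R]
    [IsStrictOrderedRing R] [Archimedean R] {a : R} (ha : a < 0) (b c : R) :
    Tendsto (fun n : ℕ => c + n * b + n ^ 2 * a) atTop atBot := by
  have hlin : Tendsto (fun n : ℕ => b + n * a) atTop atBot :=
    tendsto_atBot_add_const_left _ b (tendsto_natCast_atTop_atTop.atTop_mul_const_of_neg' ha)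
  convert tendsto_atBot_add_const_left _ c (tendsto_natCast_atTop_atTop.atTop_mul_atBot₀ hlin)
    using 2
  ring

theorem eulerForm_selfPairing_tendsto_atBot_general
    {Q0 : Type*} [Fintype Q0] [DecidableEq Q0] [Nonempty Q0]
    (E : Q0 → Q0 → ℤ) (d δ : Q0 → ℕ)
    (h1 : ∀ i : Q0, eulerForm E (Pi.single i 1) (nvec δ) < 0) :
    Tendsto (fun n : ℕ =>
        eulerForm E (fun i => (d i : ℤ) + n * δ i) (fun i => (d i : ℤ) + n * δ i))
      atTop atBot := by
  have hδ : nvec δ ≠ 0 := by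
    rintro hδ
    obtain ⟨i⟩ := ‹Nonempty Q0›
    simpa [hδ, eulerForm] using h1 i
  have hlead : eulerForm E (nvec δ) (nvec δ) < 0 :=
    eulerForm_neg_of_forall_single_left_neg E (fun i => Int.natCast_nonneg (δ i)) hδ h1
  convert tendsto_quadratic_atBot_of_neg hlead _ (eulerForm E (nvec d) (nvec d)) using 2 with n
  exact eulerForm_add_smul_self E (nvec d) (nvec δ) n

/-- Under `⟨e_i, δ⟩ < 0` and `⟨δ, e_i⟩ < 0` for all `i`, the self-pairing
`⟨d + nδ, d + nδ⟩` tends to `-∞` as `n → ∞`. -/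
theorem eulerForm_selfPairing_tendsto_atBot
    {Q0 : Type*} [Fintype Q0] [DecidableEq Q0] [Nonempty Q0]
    (E : Q0 → Q0 → ℤ) (d δ : Q0 → ℕ)
    (h1 : ∀ i : Q0, eulerForm E (Pi.single i 1) (nvec δ) < 0)
    (h2 : ∀ i : Q0, eulerForm E (nvec δ) (Pi.single i 1) < 0) :
    Tendsto (fun n : ℕ =>
        eulerForm E (fun i => (d i : ℤ) + n * δ i) (fun i => (d i : ℤ) + n * δ i))
      atTop atBot :=
  eulerForm_selfPairing_tendsto_atBot_general E d δ h1
end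

section
/- Let Q0 be a finite nonempty type and E : Q0 → Q0 → ℤ a symmetric matrix with E i i = 1 for all i and E i j ≤ 0 for i ≠ j, with form ⟨x, y⟩ := Σ_{i,j} x i * E i j * y j. Let δ : Q0 → ℕ satisfy condition (∗) for E, and let d : Q0 → ℕ have full support (d i ≥ 1 for every i). Then for every M ∈ ℤ there exists N ∈ ℕ such that for all n ≥ N and every dimension vector v : Q0 → ℕ with v ≤ d + n·δ (componentwise), v ≠ 0 and v ≠ d + n·δ, one has ⟨v, (d + n·δ) − v⟩ ≤ −M. Equivalently, max_{0 < v < d+nδ} ⟨v, d+nδ−v⟩ tends to −∞ as n → ∞. -/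
open Finset

/-- The bilinear form associated to an integer matrix `E`:
`⟨x, y⟩ = Σ_{i,j} x i * E i j * y j`. -/
def bform {Q0 : Type*} [Fintype Q0] (E : Q0 → Q0 → ℤ) (x y : Q0 → ℤ) : ℤ :=
  ∑ i, ∑ j, x i * E i j * y j

/-- The underlying simple graph of a quiver with matrix `E`: `i` is adjacent to `j`
iff `i ≠ j` and the `(i,j)` entry is negative (for symmetric `E` this is the usual
adjacency `E i j < 0`). -/
def quivGraph {Q0 : Type*} (E : Q0 → Q0 → ℤ) : SimpleGraph Q0 where
  Adj i j := i ≠ j ∧ (E i j < 0 ∨ E j i < 0)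
  symm := ⟨fun _ _ h => ⟨h.1.symm, h.2.symm⟩⟩
  loopless := ⟨fun _ h => h.1 rfl⟩

/-- The subgraph of `quivGraph E` induced on the support of `δ`. -/
def suppGraph {Q0 : Type*} (E : Q0 → Q0 → ℤ) (δ : Q0 → ℕ) :
    SimpleGraph {i : Q0 // δ i ≠ 0} :=
  (quivGraph E).comap Subtype.val

/-- Condition (∗): `⟨e_i, δ⟩ < 0` for every vertex `i`, and any two connected components
of the subgraph induced on `supp δ` are at distance at most one, i.e. either they are
joined by an edge or some vertex is adjacent to both. -/
def condStar {Q0 : Type*} [Fintype Q0] [DecidableEq Q0]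
    (E : Q0 → Q0 → ℤ) (δ : Q0 → ℕ) : Prop :=
  (∀ i : Q0, bform E (Pi.single i 1) (nvec δ) < 0) ∧
    ∀ u v : {i : Q0 // δ i ≠ 0},
      (suppGraph E δ).Reachable u v ∨
        ∃ x y : {i : Q0 // δ i ≠ 0},
          (suppGraph E δ).Reachable u x ∧ (suppGraph E δ).Reachable v y ∧
            ((quivGraph E).Adj x.1 y.1 ∨
              ∃ w : Q0, (quivGraph E).Adj w x.1 ∧ (quivGraph E).Adj w y.1)

/-- Weak condition (∗): as `condStar` but with `⟨e_i, δ⟩ ≤ 0`. -/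
def condStarWeak {Q0 : Type*} [Fintype Q0] [DecidableEq Q0]
    (E : Q0 → Q0 → ℤ) (δ : Q0 → ℕ) : Prop :=
  (∀ i : Q0, bform E (Pi.single i 1) (nvec δ) ≤ 0) ∧
    ∀ u v : {i : Q0 // δ i ≠  0},
      (suppGraph E δ).Reachable u v ∨
        ∃ x y : {i : Q0 // δ i ≠ 0},
          (suppGraph E δ).Reachable u x ∧ (suppGraph E δ).Reachable v y ∧
            ((quivGraph E).Adj x.1 y.1 ∨
              ∃ w : Q0, (quivGraph E).Adj w x.1 ∧ (quivGraph E).Adj w y.1)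


/-!
Write `w = d + nδ`. Condition (∗)(a) gives `⟨e_i, w⟩ ≤ d_i - n` for every `i`.

If `0 < v_p < w_p` for some `p`, symmetrising the off-diagonal part of the form gives
`⟨v, w - v⟩ = Σ_i r_i ⟨e_i, w⟩ + ½ Σ_{i,j} E_ij (v_i w_j - v_j w_i)² / (w_i w_j)` with
`r_i = v_i (w_i - v_i) / w_i ≥ 0`. The double sum is `≤ 0` and `r_p ≥ 1/2`, so
`2 ⟨v, w - v⟩ ≤ d_p - n`.

Otherwise `v` equals `w` on a nonempty proper subset `S` and vanishes off it, so
`⟨v, w - v⟩ = Σ_{i ∈ S, j ∉ S} w_i E_ij w_j`, a sum of nonpositive terms. By (∗) the edges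
meeting `supp δ` connect all of `Q0`, so one of them leaves `S`; as `w ≥ n` on `supp δ`,
its term is at most `-n`.
-/

lemma Finset.sum_le_apply_of_nonpos {ι M : Type*} [Fintype ι] [AddCommMonoid M] [Preorder M]
    [AddLeftMono M] {f : ι → M} (i : ι) (hf : ∀ j ≠ i, f j ≤ 0) : ∑ j, f j ≤ f i := by
  simpa using sum_le_sum_of_subset_of_nonpos' (subset_univ {i})
    fun j _ hj => hf j (by simpa using hj)

lemma Finset.sum_sum_nonpos_of_add_swap_nonpos {ι M : Type*} [Fintype ι] [AddCommGroup M]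
    [LinearOrder M] [IsOrderedAddMonoid M] {F : ι → ι → M} (hF : ∀ i j, F i j + F j i ≤ 0) :
    ∑ i, ∑ j, F i j ≤ 0 := by
  have hsum : ∑ i, ∑ j, F i j + ∑ i, ∑ j, F i j ≤ 0 := by
    conv_lhs => enter [2]; rw [sum_comm]
    simpa only [← sum_add_distrib] using sum_nonpos fun i _ => sum_nonpos fun j _ => hF i j
  by_contra! hpos
  exact (add_pos hpos hpos).not_ge hsum

section OrderedField

variable {ι K : Type*} [Fintype ι] [Field K] [LinearOrder K] [IsStrictOrderedRing K]

theorem sum_mul_mul_sub_le (E : ι → ι → K) (hsymm : ∀ i j, E i j = E j i)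
    (hoff : ∀ i j, i ≠ j → E i j ≤ 0) (v w : ι → K) (hw : ∀ i, 0 < w i) :
    ∑ i, ∑ j, v i * E i j * (w j - v j) ≤
      ∑ i, v i * (w i - v i) / w i * ∑ j, E i j * w j := by
  rw [← sub_nonpos]
  convert sum_sum_nonpos_of_add_swap_nonpos
    (F := fun i j => E i j * (v i * (w j - v j) - v i * (w i - v i) / w i * w j)) ?_ using 1
  · simp only [mul_sum, ← sum_sub_distrib]
    exact sum_congr rfl fun i _ => sum_congr rfl fun j _ => by ring
  intro i j
  have hsq : E i j * (v i * (w j - v j) - v i * (w i - v i) / w i * w j) +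
      E j i * (v j * (w i - v i) - v j * (w j - v j) / w j * w i) =
      E i j * ((v i * w j - v j * w i) ^ 2 / (w i * w j)) := by
    have := (hw i).ne'
    have := (hw j).ne'
    rw [hsymm j i]
    field_simp
    ring
  rw [hsq]
  rcases eq_or_ne i j with rfl | hij
  · simp
  · exact mul_nonpos_of_nonpos_of_nonneg (hoff i j hij) (by have := hw i; have := hw j; positivity)

theorem sum_mul_mul_sub_le_half (E : ι → ι → K) (hsymm : ∀ i j, E i j = E j i)
    (hoff : ∀ i j, i ≠ j → E i j ≤ 0) {v w : ι → K} (hv : 0 ≤ v) (hvw : v ≤ w)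
    (hw : ∀ i, 0 < w i) {c : K} (hc0 : c ≤ 0) (hc : ∀ i, ∑ j, E i j * w j ≤ c) {p : ι}
    (hp1 : 1 ≤ v p) (hpw : v p + 1 ≤ w p) :
    ∑ i, ∑ j, v i * E i j * (w j - v j) ≤ c / 2 := by
  set r : ι → K := fun i => v i * (w i - v i) / w i
  have hr : ∀ i, 0 ≤ r i := fun i =>
    div_nonneg (mul_nonneg (hv i) (sub_nonneg.2 (hvw i))) (hw i).le
  have hrp : 1 / 2 ≤ r p := by
    rw [le_div_iff₀ (hw p)]
    nlinarith
  calc _ ≤ ∑ i, r i * ∑ j, E i j * w j := sum_mul_mul_sub_le E hsymm hoff v w hw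
    _ ≤ ∑ i, r i * c := sum_le_sum fun i _ => mul_le_mul_of_nonneg_left (hc i) (hr i)
    _ ≤ r p * c := sum_le_apply_of_nonpos p fun j _ => mul_nonpos_of_nonneg_of_nonpos (hr j) hc0
    _ ≤ c / 2 := by nlinarith

end OrderedField

def SimpleGraph.touching {V : Type*} (G : SimpleGraph V) (S : Set V) : SimpleGraph V where
  Adj x y := G.Adj x y ∧ (x ∈ S ∨ y ∈ S)
  symm := ⟨fun _ _ h => ⟨h.1.symm, h.2.symm⟩⟩
  loopless := ⟨fun _ h => G.loopless.irrefl _ h.1⟩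

section Quiver

variable {ι : Type*} [Fintype ι] (E : ι → ι → ℤ)

lemma sum_mul_le_self (hdiag : ∀ i, E i i = 1) (hoff : ∀ i j, i ≠ j → E i j ≤ 0) (i : ι)
    {x : ι → ℤ} (hx : 0 ≤ x) : ∑ j, E i j * x j ≤ x i := by
  simpa [hdiag] using sum_le_apply_of_nonpos (f := fun j => E i j * x j) i
    fun j hj => mul_nonpos_of_nonpos_of_nonneg (hoff i j hj.symm) (hx j)

lemma bform_le_of_boundary (hoff : ∀ i j, i ≠ j → E i j ≤ 0) {v w : ι → ℕ} (hvw : v ≤ w)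
    (hv : ∀ i, v i ≠ 0 → v i = w i) (x y : ι) :
    bform E (nvec v) (nvec w - nvec v) ≤ v x * E x y * (w y - v y) := by
  have hterm : ∀ i j, (v i : ℤ) * E i j * (w j - v j) ≤ 0 := by
    intro i j
    have hj : (v j : ℤ) ≤ w j := by exact_mod_cast hvw j
    rcases eq_or_ne i j with rfl | hij
    · rcases eq_or_ne (v i) 0 with h0 | h0
      · simp [h0]
      · simp [hv i h0]
    · exact mul_nonpos_of_nonpos_of_nonneg
        (mul_nonpos_of_nonneg_of_nonpos (Int.natCast_nonneg _) (hoff i j hij)) (by linarith)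
  calc bform E (nvec v) (nvec w - nvec v) = ∑ i, ∑ j, (v i : ℤ) * E i j * (w j - v j) := rfl
    _ ≤ ∑ j, (v x : ℤ) * E x j * (w j - v j) :=
      sum_le_apply_of_nonpos x fun i _ => sum_nonpos fun j _ => hterm i j
    _ ≤ v x * E x y * (w y - v y) := sum_le_apply_of_nonpos y fun j _ => hterm x j

theorem two_mul_bform_le_of_interior (hsymm : ∀ i j, E i j = E j i)
    (hoff : ∀ i j, i ≠ j → E i j ≤ 0) {v w : ι → ℕ} (hvw : v ≤ w) (hw : ∀ i, 0 < w i)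
    {c : ℤ} (hc0 : c ≤ 0) (hc : ∀ i, ∑ j, E i j * (w j : ℤ) ≤ c) {p : ι} (hp0 : v p ≠ 0)
    (hpw : v p ≠ w p) : 2 * bform E (nvec v) (nvec w - nvec v) ≤ c := by
  have key := sum_mul_mul_sub_le_half (K := ℚ) (fun i j => (E i j : ℚ))
    (fun i j => by rw [hsymm]) (fun i j h => by exact_mod_cast hoff i j h)
    (v := fun i => (v i : ℚ)) (w := fun i => (w i : ℚ)) (fun i => Nat.cast_nonneg _)
    (fun i => Nat.cast_le.2 (hvw i)) (fun i => by exact_mod_cast hw i)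
    (c := (c : ℚ)) (by exact_mod_cast hc0) (fun i => by exact_mod_cast hc i) (p := p)
    (by exact_mod_cast Nat.one_le_iff_ne_zero.2 hp0)
    (by exact_mod_cast (hvw p).lt_of_ne hpw)
  have hcast : (bform E (nvec v) (nvec w - nvec v) : ℚ) =
      ∑ i, ∑ j, (v i : ℚ) * E i j * (w j - v j) := by
    simp [bform, nvec]
  have : ((2 * bform E (nvec v) (nvec w - nvec v) : ℤ) : ℚ) ≤ c := by
    push_cast
    linarith
  exact_mod_cast this

variable [DecidableEq ι]

lemma bform_single_left (i : ι) (x : ι → ℤ) :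
    bform E (Pi.single i 1) x = ∑ j, E i j * x j := by
  simp [bform, Pi.single_apply]

lemma exists_adj_of_bform_single_neg (hdiag : ∀ i, 0 ≤ E i i) {δ : ι → ℕ} {i : ι}
    (h : bform E (Pi.single i 1) (nvec δ) < 0) : ∃ j, (quivGraph E).Adj i j ∧ δ j ≠ 0 := by
  by_contra! hnone
  rw [bform_single_left] at h
  refine h.not_ge (sum_nonneg fun j _ => ?_)
  rcases eq_or_ne i j with rfl | hij
  · exact mul_nonneg (hdiag i) (Int.natCast_nonneg _)
  by_cases hE : E i j < 0
  · simp [nvec, hnone j ⟨hij, Or.inl hE⟩]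
  · exact mul_nonneg (not_lt.1 hE) (Int.natCast_nonneg _)

theorem touching_preconnected_of_condStar (hdiag : ∀ i, 0 ≤ E i i) {δ : ι → ℕ}
    (hδ : condStar E δ) : ((quivGraph E).touching {i | δ i ≠ 0}).Preconnected := by
  set G := (quivGraph E).touching {i | δ i ≠ 0}
  let f : suppGraph E δ →g G := ⟨Subtype.val, fun {u _} h => ⟨h, Or.inl u.2⟩⟩
  have hsupp : ∀ u v : {i // δ i ≠ 0}, G.Reachable u v := by
    intro u v
    rcases hδ.2 u v with huv | ⟨x, y, hux, hvy, hxy⟩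
    · exact huv.map f
    refine (hux.map f).trans (SimpleGraph.Reachable.trans ?_ (hvy.map f).symm)
    rcases hxy with hxy | ⟨z, hzx, hzy⟩
    · exact SimpleGraph.Adj.reachable (G := G) ⟨hxy, Or.inl x.2⟩
    · exact (SimpleGraph.Adj.reachable (G := G) ⟨hzx.symm, Or.inl x.2⟩).trans
        (SimpleGraph.Adj.reachable (G := G) ⟨hzy, Or.inr y.2⟩)
  intro a b
  obtain ⟨a', ha, ha'⟩ := exists_adj_of_bform_single_neg E hdiag (hδ.1 a)
  obtain ⟨b', hb, hb'⟩ := exists_adj_of_bform_single_neg E hdiag (hδ.1 b)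
  exact (SimpleGraph.Adj.reachable (G := G) ⟨ha, Or.inr ha'⟩).trans
    ((hsupp ⟨a', ha'⟩ ⟨b', hb'⟩).trans (SimpleGraph.Adj.reachable (G := G) ⟨hb, Or.inr hb'⟩).symm)

lemma sum_mul_add_mul_le (hdiag : ∀ i, E i i = 1) (hoff : ∀ i j, i ≠ j → E i j ≤ 0)
    {δ : ι → ℕ} (hδ : ∀ i, bform E (Pi.single i 1) (nvec δ) < 0) (d : ι → ℕ) (n : ℕ)
    (i : ι) : ∑ j, E i j * ((d j + n * δ j : ℕ) : ℤ) ≤ d i - n := by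
  have hd : ∑ j, E i j * (d j : ℤ) ≤ d i :=
    sum_mul_le_self E hdiag hoff i (x := nvec d) fun j => Int.natCast_nonneg _
  have hδi : ∑ j, E i j * (δ j : ℤ) ≤ -1 := by
    have := hδ i
    rw [bform_single_left] at this
    exact Int.le_sub_one_of_lt this
  have hsplit : ∑ j, E i j * ((d j + n * δ j : ℕ) : ℤ) =
      ∑ j, E i j * (d j : ℤ) + n * ∑ j, E i j * (δ j : ℤ) := by
    simp only [mul_sum, ← sum_add_distrib]
    exact sum_congr rfl fun j _ => by push_cast; ring
  rw [hsplit]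
  nlinarith [show (0 : ℤ) ≤ n from Int.natCast_nonneg _]

theorem bform_le_neg_of_boundary (hsymm : ∀ i j, E i j = E j i) (hdiag : ∀ i, 0 ≤ E i i)
    (hoff : ∀ i j, i ≠ j → E i j ≤ 0) {δ : ι → ℕ} (hδ : condStar E δ) {n : ℕ}
    {v w : ι → ℕ} (hw : ∀ i, 1 ≤ w i) (hwδ : ∀ i, δ i ≠ 0 → n ≤ w i) (hvw : v ≤ w)
    (hv : ∀ i, v i ≠ 0 → v i = w i) (hv0 : v ≠ 0) (hvw' : v ≠ w) :
    bform E (nvec v) (nvec w - nvec v) ≤ -n := by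
  obtain ⟨a, ha⟩ := Function.ne_iff.1 hv0
  obtain ⟨b, hb⟩ := Function.ne_iff.1 hvw'
  have hb0 : v b = 0 := by
    by_contra h
    exact hb (hv b h)
  obtain ⟨walk⟩ := touching_preconnected_of_condStar E hdiag hδ a b
  obtain ⟨⟨⟨x, y⟩, hquiv, hS⟩, -, hx, hy⟩ :=
    walk.exists_boundary_dart {i | v i ≠ 0} ha (by simpa using hb0)
  change v x ≠ 0 at hx
  have hy0 : v y = 0 := not_not.1 hy
  have hExy : E x y < 0 := hquiv.2.elim id fun h => (hsymm x y).trans_lt h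
  have hwx : (1 : ℤ) ≤ w x := by exact_mod_cast hw x
  have hwy : (1 : ℤ) ≤ w y := by exact_mod_cast hw y
  have hwxy : (n : ℤ) ≤ w x * w y := by
    rcases hS with h | h
    · have : (n : ℤ) ≤ w x := by exact_mod_cast hwδ x h
      nlinarith
    · have : (n : ℤ) ≤ w y := by exact_mod_cast hwδ y h
      nlinarith
  calc bform E (nvec v) (nvec w - nvec v) ≤ v x * E x y * (w y - v y) :=
        bform_le_of_boundary E hoff hvw hv x y
    _ = w x * E x y * w y := by
        rw [hv x hx, hy0]
        push_cast
        ring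
    _ ≤ -n := by nlinarith

end Quiver

theorem form_max_tendsto_atBot_general
    {Q0 : Type*} [Fintype Q0] [DecidableEq Q0]
    (E : Q0 → Q0 → ℤ) (hsymm : ∀ i j, E i j = E j i)
    (hdiag : ∀ i, E i i = 1) (hoff : ∀ i j, i ≠ j → E i j ≤ 0)
    (δ : Q0 → ℕ) (hδ : condStar E δ)
    (d : Q0 → ℕ) (hd : ∀ i, 1 ≤ d i) :
    ∀ M : ℤ, ∃ N : ℕ, ∀ n ≥ N, ∀ v : Q0 → ℕ,
      (∀ i, v i ≤ d i + n * δ i) → v ≠ 0 → v ≠ (fun i => d i + n * δ i) →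
        bform E (nvec v) (fun i => ((d i : ℤ) + n * δ i) - v i) ≤ -M := by
  intro M
  obtain ⟨D, hD⟩ : ∃ D : ℕ, ∀ i, d i ≤ D := ⟨univ.sup d, fun i => le_sup (mem_univ i)⟩
  refine ⟨D + 2 * M.toNat, fun n hn v hvw hv0 hvw' => ?_⟩
  set w : Q0 → ℕ := fun i => d i + n * δ i
  have hsub : (fun i => ((d i : ℤ) + n * δ i) - v i) = nvec w - nvec v := by
    ext i
    simp [w, nvec]
  have hM := Int.self_le_toNat M
  rw [hsub]
  by_cases hinterior : ∃ p, v p ≠ 0 ∧ v p ≠ w p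
  · obtain ⟨p, hp0, hpw⟩ := hinterior
    have := two_mul_bform_le_of_interior E hsymm hoff (w := w) hvw
      (fun i => Nat.lt_of_lt_of_le (hd i) (Nat.le_add_right _ _)) (c := D - n) (by omega)
      (fun i => (sum_mul_add_mul_le E hdiag hoff hδ.1 d n i).trans (by have := hD i; omega))
      hp0 hpw
    omega
  · push Not at hinterior
    have := bform_le_neg_of_boundary E hsymm (fun i => (hdiag i) ▸ zero_le_one) hoff hδ (w := w)
      (fun i => (hd i).trans (Nat.le_add_right _ _))
      (fun i hi => (Nat.le_mul_of_pos_right n (Nat.pos_of_ne_zero hi)).trans (Nat.le_add_left _ _))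
      hvw hinterior hv0 hvw'
    omega

/-- Lemma 3.2: for a symmetric quiver without loops (encoded by `E` with unit diagonal and
nonpositive off-diagonal entries), `δ` satisfying (∗) and `d` of full support,
`max_{0 < v < d + nδ} ⟨v, d + nδ - v⟩ → -∞` as `n → ∞`. -/
theorem form_max_tendsto_atBot
    {Q0 : Type*} [Fintype Q0] [DecidableEq Q0] [Nonempty Q0]
    (E : Q0 → Q0 → ℤ) (hsymm : ∀ i j, E i j = E j i)
    (hdiag : ∀ i, E i i = 1) (hoff : ∀ i j, i ≠ j → E i j ≤ 0)
    (δ : Q0 → ℕ) (hδ : condStar E δ)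
    (d : Q0 → ℕ) (hd : ∀ i, 1 ≤ d i) :
    ∀ M : ℤ, ∃ N : ℕ, ∀ n ≥ N, ∀ v : Q0 → ℕ,
      (∀ i, v i ≤ d i + n * δ i) → v ≠ 0 → v ≠ (fun i => d i + n * δ i) →
        bform E (nvec v) (fun i => ((d i : ℤ) + n * δ i) - v i) ≤ -M :=
  form_max_tendsto_atBot_general E hsymm hdiag hoff δ hδ d hd
end

section
/- Let Q0 be a finite nonempty type and E : Q0 → Q0 → ℤ a symmetric matrix with E i i = 1 for all i and E i j ≤ 0 for i ≠ j, with form ⟨x, y⟩ := Σ_{i,j} x i * E i j * y j. Let δ : Q0 → ℕ satisfy condition (∗) for E, and let τ : Q0 → ℕ be a dimension vector with τ i ≥ 1 for every i and ⟨e_i, τ⟩ < 0 for every i. Define the rational number M(τ) := max( max_{i ∈ Q0} (1 − 1/τ i) · ⟨e_i, τ⟩ , −(min_{i ∈ Q0} τ i) · (min_{j ∈ supp δ} τ j) ). Then for every dimension vector v : Q0 → ℕ with v ≤ τ, v ≠ 0 and v ≠ τ, one has ⟨v, τ − v⟩ ≤ M(τ). -/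
open Finset

/-!
Put `μ i = v i / τ i ∈ [0, 1]` and `c i j = τ i * E i j * τ j`. Then
`⟨v, τ - v⟩ = Σ μ i (1 - μ j) c i j`, and since `c` is symmetric with nonpositive off-diagonal
entries, replacing `1 - μ j` by `1 - μ i` can only increase the sum (the difference is
`-½ Σ c i j (μ i - μ j)²`). This leaves `Σ μ i (1 - μ i) τ i ⟨e_i, τ⟩`, a sum of nonpositive
terms, which is at most its term at any vertex `k`; if `0 < v k < τ k` that term is at most
`(1 - 1/τ k) ⟨e_k, τ⟩`.

Otherwise every `v i` is `0` or `τ i`, and all terms of `⟨v, τ - v⟩` are nonpositive. Every vertex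
has a neighbour in `supp δ` (as `⟨e_i, δ⟩ < 0`), so by (∗) the edges meeting `supp δ` connect
`Q0`. Hence one of them, `a b`, joins `supp v` to its complement, and its term alone is at most
`-τ a τ b`.
-/

namespace SimpleGraph

variable {α : Type*} {G : SimpleGraph α}

def edgesMeeting (G : SimpleGraph α) (D : Set α) : SimpleGraph α where
  Adj a b := G.Adj a b ∧ (a ∈ D ∨ b ∈ D)
  symm := ⟨fun _ _ h => ⟨h.1.symm, h.2.symm⟩⟩
  loopless := ⟨fun _ h => G.irrefl h.1⟩

@[simp]
theorem edgesMeeting_adj {D : Set α} {a b : α} :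
    (G.edgesMeeting D).Adj a b ↔ G.Adj a b ∧ (a ∈ D ∨ b ∈ D) :=
  Iff.rfl

theorem Reachable.exists_adj_boundary {P : α → Prop} {u w : α} (h : G.Reachable u w)
    (hu : P u) (hw : ¬P w) : ∃ a b, G.Adj a b ∧ P a ∧ ¬P b := by
  obtain ⟨p⟩ := h
  obtain ⟨d, -, hd⟩ := p.exists_boundary_dart {x | P x} hu hw
  exact ⟨d.fst, d.snd, d.adj, hd⟩

theorem Reachable.edgesMeeting_of_comap {p : α → Prop} {u w : Subtype p}
    (h : (G.comap Subtype.val).Reachable u w) :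
    (G.edgesMeeting {x | p x}).Reachable u w :=
  h.map { toFun := Subtype.val, map_rel' := fun {a _} hab => edgesMeeting_adj.2 ⟨hab, Or.inl a.2⟩ }

theorem edgesMeeting_reachable {D : Set α} (hdom : ∀ a, ∃ d ∈ D, G.Adj a d)
    (hD : ∀ d ∈ D, ∀ d' ∈ D, (G.edgesMeeting D).Reachable d d') (a b : α) :
    (G.edgesMeeting D).Reachable a b := by
  obtain ⟨d, hd, had⟩ := hdom a
  obtain ⟨d', hd', hbd'⟩ := hdom b
  have had : (G.edgesMeeting D).Adj a d := edgesMeeting_adj.2 ⟨had, Or.inr hd⟩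
  have hbd' : (G.edgesMeeting D).Adj b d' := edgesMeeting_adj.2 ⟨hbd', Or.inr hd'⟩
  exact had.reachable.trans ((hD d hd d' hd').trans hbd'.reachable.symm)

end SimpleGraph

section OrderedRing

variable {ι R : Type*} [Fintype ι]

theorem sum_le_of_nonpos [AddCommMonoid R] [PartialOrder R] [IsOrderedAddMonoid R] {f : ι → R}
    (hf : ∀ i, f i ≤ 0) (k : ι) : ∑ i, f i ≤ f k := by
  classical
  exact (sum_le_sum_of_subset_of_nonpos' (subset_univ {k}) fun i _ _ => hf i).trans_eq
    (sum_singleton _ _)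

theorem sum_sum_le_of_mul_eq_zero [CommRing R] [PartialOrder R] [IsOrderedRing R]
    {A : ι → ι → R} (hoff : ∀ i j, i ≠ j → A i j ≤ 0) {x y : ι → R} (hx : ∀ i, 0 ≤ x i)
    (hy : ∀ i, 0 ≤ y i) (hxy : ∀ i, x i * y i = 0) (a b : ι) :
    ∑ i, ∑ j, x i * A i j * y j ≤ x a * A a b * y b := by
  have hterm : ∀ p : ι × ι, x p.1 * A p.1 p.2 * y p.2 ≤ 0 := by
    rintro ⟨i, j⟩
    obtain rfl | hij := eq_or_ne i j
    · rw [mul_right_comm, hxy, zero_mul]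
    · exact mul_nonpos_of_nonpos_of_nonneg
        (mul_nonpos_of_nonneg_of_nonpos (hx i) (hoff i j hij)) (hy j)
  rw [← Fintype.sum_prod_type']
  exact sum_le_of_nonpos hterm (a, b)

theorem sum_sum_mul_one_sub_le [CommRing R] [LinearOrder R] [IsStrictOrderedRing R]
    {c : ι → ι → R} (hc : ∀ i j, c i j = c j i) (hoff : ∀ i j, i ≠ j → c i j ≤ 0)
    (μ : ι → R) :
    ∑ i, ∑ j, μ i * (1 - μ j) * c i j ≤ ∑ i, μ i * (1 - μ i) * ∑ j, c i j := by
  have hsq : ∑ i, ∑ j, c i j * (μ i - μ j) ^ 2 ≤ 0 := by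
    refine sum_nonpos fun i _ => sum_nonpos fun j _ => ?_
    obtain rfl | hij := eq_or_ne i j
    · simp
    · exact mul_nonpos_of_nonpos_of_nonneg (hoff i j hij) (sq_nonneg _)
  have hgap : ∑ i, μ i * (1 - μ i) * ∑ j, c i j - ∑ i, ∑ j, μ i * (1 - μ j) * c i j =
      ∑ i, ∑ j, c i j * μ i * (μ j - μ i) := by
    simp only [mul_sum, ← sum_sub_distrib]
    refine sum_congr rfl fun i _ => sum_congr rfl fun j _ => ?_
    ring
  have hswap : ∑ i, ∑ j, c i j * μ i * (μ j - μ i) = ∑ i, ∑ j, c i j * μ j * (μ i - μ j) := by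
    rw [sum_comm]
    refine sum_congr rfl fun i _ => sum_congr rfl fun j _ => ?_
    rw [hc]
  have hsymmetrize : ∑ i, ∑ j, c i j * μ i * (μ j - μ i) + ∑ i, ∑ j, c i j * μ j * (μ i - μ j) =
      -∑ i, ∑ j, c i j * (μ i - μ j) ^ 2 := by
    simp only [← sum_add_distrib, ← sum_neg_distrib]
    refine sum_congr rfl fun i _ => sum_congr rfl fun j _ => ?_
    ring
  linarith

end OrderedRing

section Field

variable {ι K : Type*} [Fintype ι] [Field K] [LinearOrder K] [IsStrictOrderedRing K]

theorem sum_sum_mul_sub_le {A : ι → ι → K} (hA : ∀ i j, A i j = A j i)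
    (hoff : ∀ i j, i ≠ j → A i j ≤ 0) {t x : ι → K} (ht : ∀ i, 0 < t i) (hx : ∀ i, 0 ≤ x i)
    (hxt : ∀ i, x i ≤ t i) (hAt : ∀ i, ∑ j, A i j * t j ≤ 0) (k : ι) :
    ∑ i, ∑ j, x i * A i j * (t j - x j) ≤ x k * (t k - x k) / t k * ∑ j, A k j * t j := by
  set μ : ι → K := fun i => x i / t i
  have hrescale : ∑ i, ∑ j, x i * A i j * (t j - x j) =
      ∑ i, ∑ j, μ i * (1 - μ j) * (t i * A i j * t j) := by
    refine sum_congr rfl fun i _ => sum_congr rfl fun j _ => ?_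
    have := (ht i).ne'
    have := (ht j).ne'
    simp only [μ]
    field_simp
  have hrow : ∀ i, μ i * (1 - μ i) * ∑ j, t i * A i j * t j =
      x i * (t i - x i) / t i * ∑ j, A i j * t j := by
    intro i
    have := (ht i).ne'
    simp only [μ, mul_assoc, ← mul_sum]
    field_simp
  have hterm : ∀ i, x i * (t i - x i) / t i * ∑ j, A i j * t j ≤ 0 := fun i =>
    mul_nonpos_of_nonneg_of_nonpos
      (div_nonneg (mul_nonneg (hx i) (sub_nonneg.2 (hxt i))) (ht i).le) (hAt i)
  calc ∑ i, ∑ j, x i * A i j * (t j - x j)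
      = ∑ i, ∑ j, μ i * (1 - μ j) * (t i * A i j * t j) := hrescale
    _ ≤ ∑ i, μ i * (1 - μ i) * ∑ j, t i * A i j * t j :=
      sum_sum_mul_one_sub_le (fun i j => by rw [hA]; ring)
        (fun i j hij => by nlinarith [hoff i j hij, mul_pos (ht i) (ht j)]) μ
    _ = ∑ i, x i * (t i - x i) / t i * ∑ j, A i j * t j := sum_congr rfl fun i _ => hrow i
    _ ≤ x k * (t k - x k) / t k * ∑ j, A k j * t j := sum_le_of_nonpos hterm k

theorem mul_sub_div_mul_le {x t r : K} (hx : 1 ≤ x) (hxt : x + 1 ≤ t) (hr : r ≤ 0) :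
    x * (t - x) / t * r ≤ (1 - 1 / t) * r := by
  have ht : 0 < t := by linarith
  rw [one_sub_div ht.ne']
  refine mul_le_mul_of_nonpos_right (div_le_div_of_nonneg_right ?_ ht.le) hr
  nlinarith

end Field

section Quiver

variable {Q0 : Type*} [Fintype Q0] {E : Q0 → Q0 → ℤ}

theorem bform_sub_le_of_adj (hoff : ∀ i j, i ≠ j → E i j ≤ 0) {τ v : Q0 → ℕ}
    (hv : ∀ i, v i = 0 ∨ v i = τ i) {a b : Q0} (hab : E a b < 0) (ha : v a = τ a)
    (hb : v b = 0) : bform E (nvec v) (nvec τ - nvec v) ≤ -(τ a * τ b) := by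
  have hvτ : ∀ i, (v i : ℤ) ≤ τ i := fun i => by rcases hv i with h | h <;> simp [h]
  calc bform E (nvec v) (nvec τ - nvec v)
      ≤ (v a : ℤ) * E a b * ((τ b : ℤ) - v b) :=
        sum_sum_le_of_mul_eq_zero (x := fun i => (v i : ℤ)) (y := fun j => (τ j : ℤ) - v j) hoff
          (fun i => by positivity) (fun i => sub_nonneg.2 (hvτ i))
          (fun i => by rcases hv i with h | h <;> simp [h]) a b
    _ ≤ -(τ a * τ b) := by
        rw [ha, hb, Nat.cast_zero, sub_zero, mul_right_comm, ← mul_neg_one]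
        exact mul_le_mul_of_nonneg_left (by omega) (by positivity)

variable [DecidableEq Q0]

theorem bform_single_nvec (E : Q0 → Q0 → ℤ) (i : Q0) (τ : Q0 → ℕ) :
    bform E (Pi.single i 1) (nvec τ) = ∑ j, E i j * τ j := by
  simp [bform, nvec, Pi.single_apply]

theorem exists_adj_supp_of_bform_single_neg {δ : Q0 → ℕ} {i : Q0} (hdiag : 0 ≤ E i i)
    (h : bform E (Pi.single i 1) (nvec δ) < 0) : ∃ d, δ d ≠ 0 ∧ (quivGraph E).Adj i d := by
  rw [bform_single_nvec, ← sum_const_zero] at h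
  obtain ⟨d, -, hd⟩ := exists_lt_of_sum_lt h
  have hEid : E i d < 0 := neg_of_mul_neg_left hd (by positivity)
  refine ⟨d, fun hδd => by simp [hδd] at hd, fun hid => ?_, Or.inl hEid⟩
  subst hid
  exact hEid.not_ge hdiag

theorem condStar.reachable_edgesMeeting {δ : Q0 → ℕ} (hδ : condStar E δ) {d d' : Q0}
    (hd : δ d ≠ 0) (hd' : δ d' ≠ 0) :
    ((quivGraph E).edgesMeeting {i | δ i ≠ 0}).Reachable d d' := by
  rcases hδ.2 ⟨d, hd⟩ ⟨d', hd'⟩ with h | ⟨x, y, hx, hy, hxy | ⟨w, hwx, hwy⟩⟩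
  · exact h.edgesMeeting_of_comap
  · have hxy : ((quivGraph E).edgesMeeting {i | δ i ≠ 0}).Adj x y :=
      SimpleGraph.edgesMeeting_adj.2 ⟨hxy, Or.inl x.2⟩
    exact hx.edgesMeeting_of_comap.trans (hxy.reachable.trans hy.edgesMeeting_of_comap.symm)
  · have hxw : ((quivGraph E).edgesMeeting {i | δ i ≠ 0}).Adj x w :=
      SimpleGraph.edgesMeeting_adj.2 ⟨hwx.symm, Or.inl x.2⟩
    have hwy : ((quivGraph E).edgesMeeting {i | δ i ≠ 0}).Adj w y :=
      SimpleGraph.edgesMeeting_adj.2 ⟨hwy, Or.inr y.2⟩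
    exact hx.edgesMeeting_of_comap.trans
      (hxw.reachable.trans (hwy.reachable.trans hy.edgesMeeting_of_comap.symm))

theorem condStar.exists_adj_boundary {δ : Q0 → ℕ} (hdiag : ∀ i, 0 ≤ E i i)
    (hδ : condStar E δ) {P : Q0 → Prop} {u w : Q0} (hu : P u) (hw : ¬P w) :
    ∃ a b, (quivGraph E).Adj a b ∧ P a ∧ ¬P b ∧ (δ a ≠ 0 ∨ δ b ≠ 0) := by
  have hreach := SimpleGraph.edgesMeeting_reachable
    (fun i => exists_adj_supp_of_bform_single_neg (hdiag i) (hδ.1 i))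
    (fun d hd d' hd' => hδ.reachable_edgesMeeting hd hd') u w
  obtain ⟨a, b, ⟨hab, hδab⟩, ha, hb⟩ := hreach.exists_adj_boundary hu hw
  exact ⟨a, b, hab, ha, hb, hδab⟩

theorem bform_sub_le_of_pos_of_lt (hsymm : ∀ i j, E i j = E j i)
    (hoff : ∀ i j, i ≠ j → E i j ≤ 0) {τ v : Q0 → ℕ} (hτ : ∀ i, 1 ≤ τ i)
    (hτE : ∀ i, bform E (Pi.single i 1) (nvec τ) ≤ 0) (hv : ∀ i, v i ≤ τ i) {k : Q0}
    (hk0 : 0 < v k) (hkτ : v k < τ k) :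
    (bform E (nvec v) (nvec τ - nvec v) : ℚ) ≤
      (1 - 1 / (τ k : ℚ)) * (bform E (Pi.single k 1) (nvec τ) : ℚ) := by
  have hrow : ∀ i, (bform E (Pi.single i 1) (nvec τ) : ℚ) = ∑ j, (E i j : ℚ) * τ j := by
    simp [bform_single_nvec]
  have hτE' : ∀ i, ∑ j, (E i j : ℚ) * τ j ≤ 0 := fun i => by
    rw [← hrow]
    exact_mod_cast hτE i
  have hform : (bform E (nvec v) (nvec τ - nvec v) : ℚ) =
      ∑ i, ∑ j, (v i : ℚ) * E i j * ((τ j : ℚ) - v j) := by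
    simp [bform, nvec]
  rw [hform, hrow]
  refine (sum_sum_mul_sub_le (by exact_mod_cast hsymm) (by exact_mod_cast hoff)
    (fun i => by exact_mod_cast hτ i) (fun i => by positivity) (fun i => by exact_mod_cast hv i)
    hτE' k).trans ?_
  exact mul_sub_div_mul_le (by exact_mod_cast hk0) (by exact_mod_cast hkτ) (hτE' k)

end Quiver

theorem inf'_mul_inf'_le_mul {ι K : Type*} [Fintype ι] [Nonempty ι] [CommSemiring K]
    [LinearOrder K] [IsOrderedRing K] {f : ι → K} (hf : ∀ i, 0 ≤ f i) {s : Finset ι}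
    (hs : s.Nonempty) {a b : ι} (hab : a ∈ s ∨ b ∈ s) :
    univ.inf' univ_nonempty f * s.inf' hs f ≤ f a * f b := by
  have hs0 : 0 ≤ s.inf' hs f := le_inf' _ _ fun i _ => hf i
  rcases hab with ha | hb
  · rw [mul_comm (f a)]
    exact mul_le_mul (inf'_le _ (mem_univ b)) (inf'_le _ ha) hs0 (hf b)
  · exact mul_le_mul (inf'_le _ (mem_univ a)) (inf'_le _ hb) hs0 (hf a)

/-- The explicit bound (3.2) from the proof of Lemma 3.2 / Remark 3.5: for `δ` satisfying
(∗) (which together with `Q0 ≠ ∅` forces `supp δ ≠ ∅`, recorded as `hne`) and any `τ` with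
all entries positive and `⟨e_i, τ⟩ < 0`, every proper nonzero subvector `v ≤ τ` satisfies
`⟨v, τ - v⟩ ≤ M(τ) = max(max_i (1 - 1/τ_i)⟨e_i, τ⟩, -(min_i τ_i)(min_{j ∈ supp δ} τ_j))`. -/
theorem form_le_explicit_bound
    {Q0 : Type*} [Fintype Q0] [DecidableEq Q0] [Nonempty Q0]
    (E : Q0 → Q0 → ℤ) (hsymm : ∀ i j, E i j = E j i)
    (hdiag : ∀ i, E i i = 1) (hoff : ∀ i j, i ≠ j → E i j ≤ 0)
    (δ : Q0 → ℕ) (hδ : condStar E δ)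
    (hne : (Finset.univ.filter fun j => δ j ≠ 0).Nonempty)
    (τ : Q0 → ℕ) (hτ1 : ∀ i, 1 ≤ τ i)
    (hτ2 : ∀ i, bform E (Pi.single i 1) (nvec τ) < 0)
    (v : Q0 → ℕ) (hv : ∀ i, v i ≤ τ i) (hv0 : v ≠ 0) (hvτ : v ≠ τ) :
    (bform E (nvec v) (nvec τ - nvec v) : ℚ) ≤
      max
        (Finset.univ.sup' Finset.univ_nonempty fun i =>
          (1 - 1 / (τ i : ℚ)) * (bform E (Pi.single i 1) (nvec τ) : ℚ))
        (-((Finset.univ.inf' Finset.univ_nonempty fun i => (τ i : ℚ)) *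
            ((Finset.univ.filter fun j => δ j ≠ 0).inf' hne fun j => (τ j : ℚ)))) := by
  by_cases hmid : ∃ k, 0 < v k ∧ v k < τ k
  · obtain ⟨k, hk0, hkτ⟩ := hmid
    refine le_max_of_le_left (le_trans ?_ (le_sup' _ (mem_univ k)))
    exact bform_sub_le_of_pos_of_lt hsymm hoff hτ1 (fun i => (hτ2 i).le) hv hk0 hkτ
  · push Not at hmid
    have hext : ∀ i, v i = 0 ∨ v i = τ i := fun i => by
      have := hmid i
      have := hv i
      omega
    obtain ⟨u, hu⟩ := Function.ne_iff.1 hv0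
    obtain ⟨w, hw⟩ := Function.ne_iff.1 hvτ
    obtain ⟨a, b, hab, ha, hb, hδab⟩ := hδ.exists_adj_boundary (fun i => by simp [hdiag])
      (P := fun i => v i = τ i) ((hext u).resolve_left hu) hw
    have hEab : E a b < 0 := hab.2.elim id fun h => hsymm a b ▸ h
    refine le_max_of_le_right (le_trans ?_ (neg_le_neg
      (inf'_mul_inf'_le_mul (fun i => by positivity) hne (by simpa using hδab))))
    exact_mod_cast bform_sub_le_of_adj hoff hext hEab ha ((hext b).resolve_right hb)
end

section
/- Let Q0 be a finite type, E : Q0 → Q0 → ℚ a symmetric matrix, and τ, v : Q0 → ℚ vectors with τ i ≠ 0 for every i. Then 2 · Σ_{i,j} v i * E i j * (τ j − v j) = 2 · Σ_i v i * (1 − v i / τ i) * (Σ_j E i j * τ j) + Σ_{i ≠ j} E i j * τ i * τ j * (v i / τ i − v j / τ j)^2. -/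
/-!
Write `x i = v i / τ i`. The difference between the two sides is twice the sum of
`E i j * τ i * τ j * x i * (x i - x j)`; symmetrizing this in `i, j` (using `E i j = E j i`)
turns it into the sum of `E i j * τ i * τ j * (x i - x j) ^ 2`, whose diagonal terms vanish.
-/

open Finset

theorem Finset.two_mul_sum_sum_eq_sum_sum_add_swap {ι R : Type*} [NonAssocSemiring R]
    (s : Finset ι) (f : ι → ι → R) :
    2 * ∑ i ∈ s, ∑ j ∈ s, f i j = ∑ i ∈ s, ∑ j ∈ s, (f i j + f j i) := by
  rw [two_mul]
  nth_rewrite 2 [sum_comm]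
  simp only [sum_add_distrib]

/-- The algebraic identity from the proof of Lemma 3.2: for a symmetric matrix `E` over `ℚ`
and vectors `τ, v` with all `τ i ≠ 0`,
`2⟨v, τ - v⟩ = 2 Σ_i v_i (1 - v_i/τ_i) ⟨e_i, τ⟩ + Σ_{i ≠ j} E_{ij} τ_i τ_j (v_i/τ_i - v_j/τ_j)²`. -/
theorem two_mul_form_eq_diag_add_offdiag
    {Q0 : Type*} [Fintype Q0] [DecidableEq Q0]
    (E : Q0 → Q0 → ℚ) (hsymm : ∀ i j, E i j = E j i)
    (τ v : Q0 → ℚ) (hτ : ∀ i, τ i ≠ 0) :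
    2 * ∑ i, ∑ j, v i * E i j * (τ j - v j) =
      2 * ∑ i, v i * (1 - v i / τ i) * (∑ j, E i j * τ j) +
        ∑ i, ∑ j ∈ Finset.univ.filter (fun j => j ≠ i),
          E i j * τ i * τ j * (v i / τ i - v j / τ j) ^ 2 := by
  set H : Q0 → Q0 → ℚ := fun i j => E i j * v i * (v i / τ i * τ j - v j)
  have symmetrize : ∀ i j, H i j + H j i = E i j * τ i * τ j * (v i / τ i - v j / τ j) ^ 2 := by
    intro i j
    simp only [H, hsymm j i]
    field_simp [hτ i, hτ j]
    ring
  calc 2 * ∑ i, ∑ j, v i * E i j * (τ j - v j)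
      = 2 * ∑ i, v i * (1 - v i / τ i) * (∑ j, E i j * τ j) + 2 * ∑ i, ∑ j, H i j := by
        rw [← mul_add, ← sum_add_distrib]
        congr 1
        refine sum_congr rfl fun i _ => ?_
        rw [mul_sum, ← sum_add_distrib]
        exact sum_congr rfl fun j _ => by ring
    _ = _ := by
        rw [two_mul_sum_sum_eq_sum_sum_add_swap]
        simp_rw [symmetrize, filter_ne']
        congr 1
        refine sum_congr rfl fun i _ => (sum_erase _ ?_).symm
        simp
end

section
/- Let Q0 be a finite nonempty type and let d : Q0 → ℕ be a nonzero dimension vector. Then the greatest common divisor of the values {d i : i ∈ Q0} equals 1 if and only if there exists χ : Q0 → ℤ such that for every dimension vector v : Q0 → ℕ with v ≤ d (componentwise), v ≠ 0 and v ≠ d, one has (Σ_i χ i * v i) * (Σ_i d i) ≠ (Σ_i χ i * d i) * (Σ_i v i). -/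
/-!
Bézout gives `χ` with `∑ χ i d i = 1`; for this `χ` an equality of the cross-multiplied slopes
says that `∑ d` divides `∑ v`, impossible for `0 < ∑ v < ∑ d`. Conversely, if `g ≥ 2` divides
every `d i`, then `v = d / g` is a proper nonzero subvector with `s(v) = s(d)` for every `χ`.
-/

open Finset

theorem Finset.natCast_gcd {ι : Type*} (s : Finset ι) (f : ι → ℕ) :
    ((s.gcd f : ℕ) : ℤ) = s.gcd fun i ↦ (f i : ℤ) := by
  classical
  induction s using Finset.induction with
  | empty => simp
  | insert a s ha ih =>
    rw [gcd_insert, gcd_insert, ← ih, ← Int.coe_gcd, Int.gcd_natCast_natCast]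
    rfl

theorem Finset.exists_sum_mul_eq_one_of_gcd_eq_one {ι : Type*} {s : Finset ι} {f : ι → ℕ}
    (h : s.gcd f = 1) : ∃ χ : ι → ℤ, ∑ i ∈ s, χ i * f i = 1 := by
  obtain ⟨χ, hχ⟩ := s.gcd_eq_sum_mul fun i ↦ (f i : ℤ)
  refine ⟨χ, ?_⟩
  rw [← natCast_gcd, h, Nat.cast_one] at hχ
  simpa only [mul_comm] using hχ.symm

section Subvector

variable {ι : Type*} [Fintype ι] {v d : ι → ℕ}

theorem cross_slope_eq_of_eq_smul (χ : ι → ℤ) {g : ℕ} (h : d = g • v) :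
    (∑ i, χ i * v i) * (∑ i, (d i : ℤ)) = (∑ i, χ i * d i) * (∑ i, (v i : ℤ)) := by
  simp only [h, Pi.smul_apply, smul_eq_mul, Nat.cast_mul, mul_left_comm (χ _), ← Finset.mul_sum]
  ring

theorem cross_slope_ne_of_sum_mul_eq_one {χ : ι → ℤ} (hχ : ∑ i, χ i * d i = 1)
    (hle : ∀ i, v i ≤ d i) (hv0 : v ≠ 0) (hvd : v ≠ d) :
    (∑ i, χ i * v i) * (∑ i, (d i : ℤ)) ≠ (∑ i, χ i * d i) * (∑ i, (v i : ℤ)) := by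
  intro heq
  rw [hχ, one_mul] at heq
  have hpos : 0 < ∑ i, v i := Fintype.sum_pos (lt_of_le_of_ne (fun i ↦ Nat.zero_le _) hv0.symm)
  have hlt : ∑ i, v i < ∑ i, d i := Fintype.sum_strictMono (lt_of_le_of_ne hle hvd)
  have hdvd : ∑ i, d i ∣ ∑ i, v i := Int.natCast_dvd_natCast.mp <| by
    push_cast
    exact ⟨_, heq.symm.trans (mul_comm _ _)⟩
  exact (Nat.le_of_dvd hpos hdvd).not_gt hlt

theorem exists_proper_subvector_of_gcd_ne_one (hd : d ≠ 0) (hg : univ.gcd d ≠ 1) :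
    ∃ v : ι → ℕ, d = univ.gcd d • v ∧ (∀ i, v i ≤ d i) ∧ v ≠ 0 ∧ v ≠ d := by
  set g := univ.gcd d
  have hdv : d = g • fun i ↦ d i / g :=
    funext fun i ↦ (Nat.mul_div_cancel' (gcd_dvd (mem_univ i))).symm
  refine ⟨fun i ↦ d i / g, hdv, fun i ↦ Nat.div_le_self _ _, ?_, ?_⟩
  · intro hv
    exact hd (by rw [hdv, hv, smul_zero])
  · intro hv
    obtain ⟨j, hj⟩ := Function.ne_iff.mp hd
    rw [hv] at hdv
    have hdj : g * d j = 1 * d j := by simpa using (congrFun hdv j).symm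
    exact hg (Nat.eq_of_mul_eq_mul_right (Nat.pos_of_ne_zero hj) hdj)

end Subvector

theorem gcd_eq_one_iff_exists_generic_character_general
    {Q0 : Type*} [Fintype Q0] (d : Q0 → ℕ) (hd : d ≠ 0) :
    Finset.univ.gcd d = 1 ↔
      ∃ χ : Q0 → ℤ, ∀ v : Q0 → ℕ, (∀ i, v i ≤ d i) → v ≠ 0 → v ≠ d →
        (∑ i, χ i * v i) * (∑ i, (d i : ℤ)) ≠ (∑ i, χ i * d i) * (∑ i, (v i : ℤ)) := by
  refine ⟨fun h ↦ ?_, fun ⟨χ, hχ⟩ ↦ ?_⟩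
  · obtain ⟨χ, hχ⟩ := exists_sum_mul_eq_one_of_gcd_eq_one h
    exact ⟨χ, fun v ↦ cross_slope_ne_of_sum_mul_eq_one hχ⟩
  · by_contra hg
    obtain ⟨v, hdv, hle, hv0, hvd⟩ := exists_proper_subvector_of_gcd_ne_one hd hg
    exact hχ v hle hv0 hvd (cross_slope_eq_of_eq_smul χ hdv)

/-- A generic character (with respect to `d`) exists if and only if `d` is indivisible:
the gcd of the entries of a nonzero dimension vector `d` is `1` iff there is `χ : Q0 → ℤ`
whose slope separates every proper nonzero subvector `v ≤ d` from `d` (in cross-multiplied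
form). -/
theorem gcd_eq_one_iff_exists_generic_character
    {Q0 : Type*} [Fintype Q0] [Nonempty Q0] (d : Q0 → ℕ) (hd : d ≠ 0) :
    Finset.univ.gcd d = 1 ↔
      ∃ χ : Q0 → ℤ, ∀ v : Q0 → ℕ, (∀ i, v i ≤ d i) → v ≠ 0 → v ≠ d →
        (∑ i, χ i * v i) * (∑ i, (d i : ℤ)) ≠ (∑ i, χ i * d i) * (∑ i, (v i : ℤ)) :=
  gcd_eq_one_iff_exists_generic_character_general d hd
end

section
/- Let Q0 be a finite nonempty type and E : Q0 → Q0 → ℤ a symmetric matrix with E i i = 1 for all i and E i j ≤ 0 for i ≠ j, with form ⟨x, y⟩ := Σ_{i,j} x i * E i j * y j. Let δ : Q0 → ℕ satisfy condition (∗) for E and let d : Q0 → ℕ have full support (d i ≥ 1 for every i). Then for every M ∈ ℕ there exists N ∈ ℕ such that for all n ≥ N, every k ≥ 2, and every decomposition d + n·δ = d^1 + … + d^k into nonzero dimension vectors, one has −Σ_{1 ≤ i < j ≤ k} ⟨d^i, d^j⟩ ≥ M. -/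
open Finset

/-!
Put `v = d + n • δ`; by (∗)(a), `⟨e_p, v⟩ ≤ C - n` at every vertex `p`. Twice the codimension
is `Σ_a -⟨d^a, v - d^a⟩`, a sum of `k ≥ 2` terms, so it suffices to bound `-⟨x, y⟩` below,
linearly in `n`, for every splitting `v = x + y` into nonzero parts.
If `x` and `y` share a vertex, weighting the inequalities `⟨e_i, v⟩ ≤ C - n` by
`x i * y i / v i` and comparing termwise gives `-2⟨x, y⟩ ≥ n - C`. If one part, say `y`, vanishes
on `supp δ`, it is bounded by `d` and `-⟨x, y⟩ = -⟨y, v⟩ + ⟨y, y⟩ ≥ (n - C) Σ y - K (Σ y)²`.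
Otherwise the supports are disjoint and both meet `supp δ`; condition (∗)(b) yields an edge from
one to the other with an endpoint in `supp δ`, where the part is at least `n`.
-/

open Matrix

section BilinearForm

variable {Q0 : Type*} [Fintype Q0] {E : Q0 → Q0 → ℤ}

lemma bform_eq_dotProduct (E : Q0 → Q0 → ℤ) (x y : Q0 → ℤ) : bform E x y = x ⬝ᵥ (of E *ᵥ y) := by
  simp only [bform, dotProduct, mulVec, of_apply, mul_sum, mul_assoc]

lemma bform_comm (hsymm : ∀ i j, E i j = E j i) (x y : Q0 → ℤ) :
    bform E x y = bform E y x := by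
  rw [bform, sum_comm]
  exact sum_congr rfl fun i _ => sum_congr rfl fun j _ => by rw [hsymm]; ring

lemma bform_add_right (E : Q0 → Q0 → ℤ) (x y z : Q0 → ℤ) :
    bform E x (y + z) = bform E x y + bform E x z := by
  rw [bform_eq_dotProduct, bform_eq_dotProduct, bform_eq_dotProduct, mulVec_add, dotProduct_add]

lemma bform_single_left_s6 [DecidableEq Q0] (E : Q0 → Q0 → ℤ) (p : Q0) (w : Q0 → ℤ) :
    bform E (Pi.single p 1) w = (of E *ᵥ w) p := by
  rw [bform_eq_dotProduct, single_dotProduct, one_mul]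

lemma bform_nvec_sum_right {ι : Type*} (E : Q0 → Q0 → ℤ) (x : Q0 → ℕ) (s : Finset ι)
    (y : ι → Q0 → ℕ) :
    bform E (nvec x) (nvec fun i => ∑ b ∈ s, y b i) = ∑ b ∈ s, bform E (nvec x) (nvec (y b)) := by
  have : (nvec fun i => ∑ b ∈ s, y b i) = ∑ b ∈ s, nvec (y b) := by
    ext i
    simp [nvec]
  simp only [bform_eq_dotProduct, this]
  rw [mulVec_sum, dotProduct_sum]

lemma bform_nvec_le_of_single_le [DecidableEq Q0] {w : Q0 → ℤ} {c : ℤ}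
    (h : ∀ p, bform E (Pi.single p 1) w ≤ c) (y : Q0 → ℕ) :
    bform E (nvec y) w ≤ c * ∑ i, (y i : ℤ) := by
  rw [bform_eq_dotProduct, dotProduct, mul_sum]
  refine sum_le_sum fun i _ => ?_
  rw [mul_comm c, ← bform_single_left_s6]
  exact mul_le_mul_of_nonneg_left (h i) (Int.natCast_nonneg _)

lemma neg_bform_self_le {K : ℤ} (hK : ∀ i j, -K ≤ E i j) (y : Q0 → ℕ) :
    -bform E (nvec y) (nvec y) ≤ K * (∑ i, (y i : ℤ)) ^ 2 := by
  rw [sq, sum_mul_sum, mul_sum, bform, ← sum_neg_distrib]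
  refine sum_le_sum fun i _ => ?_
  rw [mul_sum, ← sum_neg_distrib]
  refine sum_le_sum fun j _ => ?_
  have := mul_le_mul_of_nonneg_left (hK i j) (mul_nonneg (Int.natCast_nonneg (y i))
    (Int.natCast_nonneg (y j)))
  simp only [nvec]
  linarith

/-- When `x` and `y` have disjoint supports, every term of `-⟨x, y⟩` is nonnegative. -/
lemma mul_le_neg_bform_of_disjoint (hoff : ∀ i j, i ≠ j → E i j ≤ 0) {x y : Q0 → ℕ}
    (hdisj : ∀ i, x i = 0 ∨ y i = 0) {p q : Q0} (hpq : E p q < 0) :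
    (x p : ℤ) * y q ≤ -bform E (nvec x) (nvec y) := by
  have hterm : ∀ i j, 0 ≤ (x i : ℤ) * -E i j * y j := by
    intro i j
    rcases eq_or_ne i j with rfl | hij
    · rcases hdisj i with h | h <;> simp [h]
    · exact mul_nonneg (mul_nonneg (Int.natCast_nonneg _) (by linarith [hoff i j hij]))
        (Int.natCast_nonneg _)
  have hneg : -bform E (nvec x) (nvec y) = ∑ i, ∑ j, (x i : ℤ) * -E i j * y j := by
    simp only [bform, nvec, ← sum_neg_distrib, mul_neg, neg_mul]
  calc (x p : ℤ) * y q ≤ x p * -E p q * y q := by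
        nlinarith [mul_nonneg (Int.natCast_nonneg (x p)) (Int.natCast_nonneg (y q))]
    _ ≤ ∑ j, (x p : ℤ) * -E p j * y j := single_le_sum (fun j _ => hterm p j) (mem_univ q)
    _ ≤ ∑ i, ∑ j, (x i : ℤ) * -E i j * y j :=
        single_le_sum (fun i _ => sum_nonneg fun j _ => hterm i j) (mem_univ p)
    _ = -bform E (nvec x) (nvec y) := hneg.symm

end BilinearForm

lemma sum_sum_mul_swap {R ι : Type*} [Mul R] [AddCommMonoid R] [Fintype ι] {A : ι → ι → R}
    (hsymm : ∀ i j, A i j = A j i) (G : ι → ι → R) :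
    ∑ i, ∑ j, A i j * G i j = ∑ i, ∑ j, A i j * G j i := by
  rw [sum_comm]
  exact sum_congr rfl fun i _ => sum_congr rfl fun j _ => by rw [hsymm]

section HarmonicWeights

variable {K : Type*} [Field K] [LinearOrder K] [IsStrictOrderedRing K]

lemma add_mul_mul_div_add {a b : K} (ha : 0 ≤ a) (hb : 0 ≤ b) :
    (a + b) * (a * b / (a + b)) = a * b := by
  rcases (add_nonneg ha hb).eq_or_lt with hab | hab
  · obtain rfl : a = 0 := by linarith
    simp
  · exact mul_div_cancel₀ _ hab.ne'

/-- After clearing denominators the difference of the two sides is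
`((c + d) * a - (a + b) * c) ^ 2`. -/
lemma add_mul_mul_div_add_add_le {a b c d : K} (ha : 0 ≤ a) (hb : 0 ≤ b) (hc : 0 ≤ c)
    (hd : 0 ≤ d) :
    (c + d) * (a * b / (a + b)) + (a + b) * (c * d / (c + d)) ≤ a * d + c * b := by
  rcases (add_nonneg ha hb).eq_or_lt with hab | hab
  · obtain ⟨rfl, rfl⟩ : a = 0 ∧ b = 0 := ⟨by linarith, by linarith⟩
    simp
  rcases (add_nonneg hc hd).eq_or_lt with hcd | hcd
  · obtain ⟨rfl, rfl⟩ : c = 0 ∧ d = 0 := ⟨by linarith, by linarith⟩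
    simp
  rw [mul_div_assoc', mul_div_assoc', div_add_div _ _ hab.ne' hcd.ne', div_le_iff₀ (by positivity)]
  nlinarith [sq_nonneg ((c + d) * a - (a + b) * c)]

lemma sum_mul_mul_div_add_mul_le {ι : Type*} [Fintype ι] {A : ι → ι → K}
    (hsymm : ∀ i j, A i j = A j i) (hoff : ∀ i j, i ≠ j → 0 ≤ A i j) {X Y : ι → K}
    (hX : ∀ i, 0 ≤ X i) (hY : ∀ i, 0 ≤ Y i) :
    ∑ i, X i * Y i / (X i + Y i) * ∑ j, A i j * (X j + Y j) ≤ ∑ i, ∑ j, X i * A i j * Y j := by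
  set W : ι → K := fun i => X i * Y i / (X i + Y i)
  have hlhs : 2 * ∑ i, W i * ∑ j, A i j * (X j + Y j)
      = ∑ i, ∑ j, A i j * ((X j + Y j) * W i + (X i + Y i) * W j) := by
    have h : ∑ i, W i * ∑ j, A i j * (X j + Y j) = ∑ i, ∑ j, A i j * ((X j + Y j) * W i) := by
      simp only [mul_sum]
      exact sum_congr rfl fun i _ => sum_congr rfl fun j _ => by ring
    have h' : ∑ i, W i * ∑ j, A i j * (X j + Y j) = ∑ i, ∑ j, A i j * ((X i + Y i) * W j) :=
      h.trans (sum_sum_mul_swap hsymm _)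
    rw [two_mul]
    nth_rewrite 1 [h]
    rw [h']
    simp only [← sum_add_distrib, mul_add]
  have hrhs : 2 * ∑ i, ∑ j, X i * A i j * Y j = ∑ i, ∑ j, A i j * (X i * Y j + X j * Y i) := by
    have h : ∑ i, ∑ j, X i * A i j * Y j = ∑ i, ∑ j, A i j * (X i * Y j) :=
      sum_congr rfl fun i _ => sum_congr rfl fun j _ => by ring
    have h' : ∑ i, ∑ j, X i * A i j * Y j = ∑ i, ∑ j, A i j * (X j * Y i) :=
      h.trans (sum_sum_mul_swap hsymm fun i j => X i * Y j)
    rw [two_mul]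
    nth_rewrite 1 [h]
    rw [h']
    simp only [← sum_add_distrib, mul_add]
  have hterm : ∀ i j, A i j * ((X j + Y j) * W i + (X i + Y i) * W j)
      ≤ A i j * (X i * Y j + X j * Y i) := by
    intro i j
    rcases eq_or_ne i j with rfl | hij
    · simp only [W, add_mul_mul_div_add (hX i) (hY i), le_refl]
    · exact mul_le_mul_of_nonneg_left (add_mul_mul_div_add_add_le (hX i) (hY i) (hX j) (hY j))
        (hoff i j hij)
  have := sum_le_sum fun i (_ : i ∈ univ) => sum_le_sum fun j (_ : j ∈ univ) => hterm i j
  linarith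

end HarmonicWeights

lemma SimpleGraph.Reachable.exists_adj_boundary_s6 {V : Type*} {G : SimpleGraph V} {u v : V}
    (h : G.Reachable u v) (P : V → Prop) (hu : P u) (hv : ¬P v) :
    ∃ p q, G.Adj p q ∧ P p ∧ ¬P q := by
  obtain ⟨w⟩ := h
  obtain ⟨d, -, hd⟩ := w.exists_boundary_dart {x | P x} hu hv
  exact ⟨d.fst, d.snd, d.adj, hd⟩

lemma condStar.exists_adj_boundary_s6 {Q0 : Type*} [Fintype Q0] [DecidableEq Q0]
    {E : Q0 → Q0 → ℤ} {δ : Q0 → ℕ} (hδ : condStar E δ) (P : Q0 → Prop) {u v : Q0}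
    (hu : δ u ≠ 0) (hv : δ v ≠ 0) (hPu : P u) (hPv : ¬P v) :
    ∃ p q, (quivGraph E).Adj p q ∧ P p ∧ ¬P q ∧ (δ p ≠ 0 ∨ δ q ≠ 0) := by
  have inSupp {a b : {i // δ i ≠ 0}} (h : (suppGraph E δ).Reachable a b) (ha : P a) (hb : ¬P b) :
      ∃ p q, (quivGraph E).Adj p q ∧ P p ∧ ¬P q ∧ (δ p ≠ 0 ∨ δ q ≠ 0) := by
    obtain ⟨p, q, hpq, hp, hq⟩ := h.exists_adj_boundary_s6 (fun a => P a.1) ha hb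
    exact ⟨p, q, hpq, hp, hq, Or.inl p.2⟩
  rcases hδ.2 ⟨u, hu⟩ ⟨v, hv⟩ with hr | ⟨a, b, hua, hvb, hab⟩
  · exact inSupp hr hPu hPv
  rcases em' (P a) with ha | ha
  · exact inSupp hua hPu ha
  by_cases hb : P b
  · exact inSupp hvb.symm hb hPv
  rcases hab with hab | ⟨w, hwa, hwb⟩
  · exact ⟨a, b, hab, ha, hb, Or.inl a.2⟩
  by_cases hw : P w
  · exact ⟨w, b, hwb, hw, hb, Or.inr b.2⟩
  · exact ⟨a, w, hwa.symm, ha, hw, Or.inl a.2⟩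

lemma sum_sum_erase_eq_sum_sum_lt {ι R : Type*} [Fintype ι] [LinearOrder ι] [AddCommMonoid R]
    (F : ι → ι → R) :
    ∑ a, ∑ b ∈ univ.erase a, F a b = ∑ a, ∑ b with a < b, (F a b + F b a) := by
  have hsplit : ∀ a, ∑ b ∈ univ.erase a, F a b
      = ∑ b with a < b, F a b + ∑ b with b < a, F a b := fun a => by
    rw [← sum_union (disjoint_filter.mpr fun b _ h => (lt_asymm h))]
    congr 1
    ext b
    simp [ne_comm, lt_or_lt_iff_ne]
  have hswap : ∑ a, ∑ b with b < a, F a b = ∑ a, ∑ b with a < b, F b a :=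
    sum_comm' (fun _ _ => by simp)
  rw [sum_congr rfl fun a _ => hsplit a, sum_add_distrib, hswap, ← sum_add_distrib]
  simp only [← sum_add_distrib]

/-- Averaging over `a`: each pair `{a, b}` is counted twice on the left and `2 ≤ card ι`. -/
lemma le_neg_sum_sum_lt_of_le_neg_sum_erase {ι : Type*} [Fintype ι] [LinearOrder ι]
    (hcard : 2 ≤ Fintype.card ι) {F : ι → ι → ℤ} (hF : ∀ a b, F a b = F b a) {M : ℤ}
    (hM : 0 ≤ M) (h : ∀ a, M ≤ -∑ b ∈ univ.erase a, F a b) :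
    M ≤ -∑ a, ∑ b with a < b, F a b := by
  have hsum := sum_le_sum fun a (_ : a ∈ univ) => h a
  rw [sum_const, card_univ, nsmul_eq_mul, sum_neg_distrib, sum_sum_erase_eq_sum_sum_lt] at hsum
  have hdouble : ∑ a, ∑ b with a < b, (F a b + F b a) = 2 * ∑ a, ∑ b with a < b, F a b := by
    simp only [mul_sum]
    exact sum_congr rfl fun a _ => sum_congr rfl fun b _ => by rw [hF b a]; ring
  have hk : (2 : ℤ) ≤ Fintype.card ι := by exact_mod_cast hcard
  nlinarith

section Splittings

variable {Q0 : Type*} [Fintype Q0] [DecidableEq Q0] {E : Q0 → Q0 → ℤ}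

lemma le_two_mul_neg_bform_of_common_support (hsymm : ∀ i j, E i j = E j i)
    (hoff : ∀ i j, i ≠ j → E i j ≤ 0) {x y : Q0 → ℕ} {L : ℤ} (hL : 0 ≤ L)
    (hv : ∀ p, bform E (Pi.single p 1) (nvec x + nvec y) ≤ -L) {i₀ : Q0} (hx : x i₀ ≠ 0)
    (hy : y i₀ ≠ 0) :
    L ≤ 2 * -bform E (nvec x) (nvec y) := by
  set W : Q0 → ℚ := fun i => x i * y i / (x i + y i)
  have hW : ∀ i, 0 ≤ W i := fun i => by positivity
  have hW₀ : 1 / 2 ≤ W i₀ := by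
    have hx1 : (1 : ℚ) ≤ x i₀ := by exact_mod_cast Nat.one_le_iff_ne_zero.mpr hx
    have hy1 : (1 : ℚ) ≤ y i₀ := by exact_mod_cast Nat.one_le_iff_ne_zero.mpr hy
    rw [le_div_iff₀ (by positivity)]
    nlinarith
  have hvQ : ∀ i, (L : ℚ) ≤ ∑ j, -(E i j : ℚ) * (x j + y j) := fun i => by
    have := hv i
    simp only [bform_single_left_s6, mulVec, dotProduct, of_apply, Pi.add_apply, nvec] at this
    simp only [neg_mul, sum_neg_distrib]
    exact_mod_cast (le_neg.mp this)
  have hweights := sum_mul_mul_div_add_mul_le (A := fun i j => -(E i j : ℚ))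
    (fun i j => by rw [hsymm]) (fun i j hij => by simpa using hoff i j hij)
    (X := fun i => (x i : ℚ)) (Y := fun i => (y i : ℚ)) (fun i => by positivity)
    (fun i => by positivity)
  have hL' : (0 : ℚ) ≤ L := by exact_mod_cast hL
  suffices (L : ℚ) ≤ 2 * -(bform E (nvec x) (nvec y) : ℚ) by exact_mod_cast this
  calc (L : ℚ) ≤ 2 * (W i₀ * L) := by nlinarith
    _ ≤ 2 * ∑ i, W i * L := by
        gcongr
        exact single_le_sum (fun i _ => mul_nonneg (hW i) hL') (mem_univ i₀)
    _ ≤ 2 * ∑ i, W i * ∑ j, -(E i j : ℚ) * (x j + y j) := by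
        gcongr with i
        exact hvQ i
    _ ≤ 2 * ∑ i, ∑ j, (x i : ℚ) * -(E i j : ℚ) * y j :=
        mul_le_mul_of_nonneg_left hweights zero_le_two
    _ = 2 * -(bform E (nvec x) (nvec y) : ℚ) := by
        simp only [bform, nvec, Int.cast_sum, Int.cast_mul, Int.cast_natCast, ← sum_neg_distrib,
          mul_neg, neg_mul]

/-- `-⟨x, y⟩ = -⟨y, x + y⟩ + ⟨y, y⟩ ≥ L s - K s²` with `s = Σ y`. -/
lemma sub_mul_le_neg_bform_of_sum_le (hsymm : ∀ i j, E i j = E j i) {x y : Q0 → ℕ} {L : ℤ}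
    (hv : ∀ p, bform E (Pi.single p 1) (nvec x + nvec y) ≤ -L) {K D : ℕ}
    (hK : ∀ i j, -(K : ℤ) ≤ E i j) (hy : 1 ≤ ∑ i, y i) (hyD : ∑ i, y i ≤ D)
    (hKD : (K : ℤ) * D ≤ L) :
    L - K * D ≤ -bform E (nvec x) (nvec y) := by
  have hsplit : bform E (nvec x) (nvec y)
      = bform E (nvec y) (nvec x + nvec y) - bform E (nvec y) (nvec y) := by
    rw [bform_comm hsymm, bform_add_right]
    ring
  have hvy := bform_nvec_le_of_single_le hv y
  have hyy := neg_bform_self_le hK y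
  have hs : (1 : ℤ) ≤ ∑ i, (y i : ℤ) := by exact_mod_cast hy
  have hsD : ∑ i, (y i : ℤ) ≤ D := by exact_mod_cast hyD
  have hKs : (0 : ℤ) ≤ K * ∑ i, (y i : ℤ) := mul_nonneg (Int.natCast_nonneg K) (by linarith)
  nlinarith [mul_le_mul_of_nonneg_left hsD hKs]

/-- Condition (∗)(b) yields an edge `p q` with `y p = 0 ≠ y q` and an endpoint in `supp δ`,
where `x + y ≥ n`. -/
lemma le_neg_bform_of_disjoint_of_condStar (hsymm : ∀ i j, E i j = E j i)
    (hoff : ∀ i j, i ≠ j → E i j ≤ 0) {δ : Q0 → ℕ} (hδ : condStar E δ) {d : Q0 → ℕ}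
    (hd : ∀ i, 1 ≤ d i) {n : ℕ} {x y : Q0 → ℕ} (hxy : ∀ i, x i + y i = d i + n * δ i)
    (hdisj : ∀ i, x i = 0 ∨ y i = 0) {u v : Q0} (hu : δ u ≠ 0) (hxu : x u ≠ 0) (hv : δ v ≠ 0)
    (hyv : y v ≠ 0) :
    (n : ℤ) ≤ -bform E (nvec x) (nvec y) := by
  obtain ⟨p, q, hpq, hyp, hyq, hδpq⟩ :=
    hδ.exists_adj_boundary_s6 (fun i => y i = 0) hu hv ((hdisj u).resolve_left hxu) hyv
  have hEpq : E p q < 0 := hpq.2.elim id fun h => hsymm p q ▸ h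
  have hxp : x p = d p + n * δ p := by simpa [hyp] using hxy p
  have hyq' : y q = d q + n * δ q := by simpa [(hdisj q).resolve_right hyq] using hxy q
  refine le_trans ?_ (mul_le_neg_bform_of_disjoint hoff hdisj hEpq)
  have hdp := hd p
  have hdq := hd q
  have : n ≤ x p * y q := by
    rcases hδpq with h | h
    · calc n ≤ n * δ p := Nat.le_mul_of_pos_right n (Nat.pos_of_ne_zero h)
        _ ≤ x p := by omega
        _ ≤ x p * y q := Nat.le_mul_of_pos_right _ (by omega)
    · calc n ≤ n * δ q := Nat.le_mul_of_pos_right n (Nat.pos_of_ne_zero h)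
        _ ≤ y q := by omega
        _ ≤ x p * y q := Nat.le_mul_of_pos_left _ (by omega)
  exact_mod_cast this

lemma bform_single_nvec_add_le {δ : Q0 → ℕ} (hδ : ∀ p, bform E (Pi.single p 1) (nvec δ) < 0)
    {d : Q0 → ℕ} {C : ℤ} (hC : ∀ p, bform E (Pi.single p 1) (nvec d) ≤ C) {n : ℕ} ⦃x y : Q0 → ℕ⦄
    (hxy : ∀ i, x i + y i = d i + n * δ i) (p : Q0) :
    bform E (Pi.single p 1) (nvec x + nvec y) ≤ -(n - C) := by
  have hsum : nvec x + nvec y = nvec d + (n : ℤ) • nvec δ := by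
    ext i
    simp [nvec, ← Nat.cast_add, hxy i]
  have hδp : bform E (Pi.single p 1) (nvec δ) ≤ -1 := Int.le_sub_one_of_lt (hδ p)
  rw [hsum, bform_add_right, bform_eq_dotProduct _ _ ((n : ℤ) • nvec δ), mulVec_smul,
    dotProduct_smul, ← bform_eq_dotProduct, smul_eq_mul]
  nlinarith [hC p]

lemma sub_mul_sum_le_neg_bform_of_eq_zero_on_supp (hsymm : ∀ i j, E i j = E j i) {K : ℕ}
    (hK : ∀ i j, -(K : ℤ) ≤ E i j) {δ d : Q0 → ℕ} {n : ℕ} {x y : Q0 → ℕ} (hy : y ≠ 0)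
    (hxy : ∀ i, x i + y i = d i + n * δ i) (hyδ : ∀ i, δ i ≠ 0 → y i = 0) {L : ℤ}
    (hv : ∀ p, bform E (Pi.single p 1) (nvec x + nvec y) ≤ -L) (hKd : (K : ℤ) * ∑ i, d i ≤ L) :
    L - K * ∑ i, d i ≤ -bform E (nvec x) (nvec y) := by
  have hy1 : 1 ≤ ∑ i, y i := by
    obtain ⟨i, hi⟩ := Function.ne_iff.mp hy
    exact (Nat.one_le_iff_ne_zero.mpr hi).trans (single_le_sum (by simp) (mem_univ i))
  have hyd : ∑ i, y i ≤ ∑ i, d i := sum_le_sum fun i _ => by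
    have := hxy i
    rcases eq_or_ne (δ i) 0 with h | h
    · rw [h] at this
      omega
    · rw [hyδ i h]
      exact Nat.zero_le _
  exact_mod_cast sub_mul_le_neg_bform_of_sum_le hsymm hv hK hy1 hyd (by exact_mod_cast hKd)

variable (E) in
lemma exists_le_neg_bform_of_add_eq (hsymm : ∀ i j, E i j = E j i)
    (hoff : ∀ i j, i ≠ j → E i j ≤ 0) (δ : Q0 → ℕ) (hδ : condStar E δ) (d : Q0 → ℕ)
    (hd : ∀ i, 1 ≤ d i) (M : ℕ) :
    ∃ N : ℕ, ∀ n ≥ N, ∀ x y : Q0 → ℕ, x ≠ 0 → y ≠ 0 → (∀ i, x i + y i = d i + n * δ i) →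
      (M : ℤ) ≤ -bform E (nvec x) (nvec y) := by
  obtain ⟨C, hC⟩ : ∃ C : ℕ, ∀ p, bform E (Pi.single p 1) (nvec d) ≤ C :=
    ⟨univ.sup fun p => (bform E (Pi.single p 1) (nvec d)).toNat, fun p =>
      (Int.self_le_toNat _).trans (by exact_mod_cast le_sup (f := fun p =>
        (bform E (Pi.single p 1) (nvec d)).toNat) (mem_univ p))⟩
  obtain ⟨K, hK⟩ : ∃ K : ℕ, ∀ i j, -(K : ℤ) ≤ E i j :=
    ⟨univ.sup fun ij : Q0 × Q0 => (E ij.1 ij.2).natAbs, fun i j => by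
      have := le_sup (f := fun ij : Q0 × Q0 => (E ij.1 ij.2).natAbs) (mem_univ (i, j))
      dsimp only at this
      omega⟩
  refine ⟨2 * M + C + K * ∑ i, d i, fun n hn x y hx hy hxy => ?_⟩
  have hn' : ((2 * M + C + K * ∑ i, d i : ℕ) : ℤ) ≤ n := by exact_mod_cast hn
  push_cast at hn'
  have hv := bform_single_nvec_add_le (n := n) hδ.1 hC
  have hsmall {x y : Q0 → ℕ} (hy : y ≠ 0) (hxy : ∀ i, x i + y i = d i + n * δ i)
      (hyδ : ∀ i, δ i ≠ 0 → y i = 0) : (M : ℤ) ≤ -bform E (nvec x) (nvec y) := by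
    have := sub_mul_sum_le_neg_bform_of_eq_zero_on_supp hsymm hK hy hxy hyδ (hv hxy)
      (by push_cast; linarith)
    push_cast at this
    linarith
  by_cases hyδ : ∀ i, δ i ≠ 0 → y i = 0
  · exact hsmall hy hxy hyδ
  by_cases hxδ : ∀ i, δ i ≠ 0 → x i = 0
  · rw [bform_comm hsymm]
    exact hsmall hx (fun i => by rw [add_comm, hxy]) hxδ
  push Not at hyδ hxδ
  obtain ⟨v, hδv, hyv⟩ := hyδ
  obtain ⟨u, hδu, hxu⟩ := hxδ
  by_cases hcommon : ∃ i, x i ≠ 0 ∧ y i ≠ 0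
  · obtain ⟨i₀, hx₀, hy₀⟩ := hcommon
    have := le_two_mul_neg_bform_of_common_support hsymm hoff (by omega) (hv hxy) hx₀ hy₀
    omega
  · push Not at hcommon
    have := le_neg_bform_of_disjoint_of_condStar hsymm hoff hδ hd hxy
      (fun i => or_iff_not_imp_left.mpr (hcommon i)) hδu hxu hδv hyv
    omega

end Splittings

theorem codim_HN_strata_large_general
    {Q0 : Type*} [Fintype Q0] [DecidableEq Q0]
    (E : Q0 → Q0 → ℤ) (hsymm : ∀ i j, E i j = E j i)
    (hoff : ∀ i j, i ≠ j → E i j ≤ 0)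
    (δ : Q0 → ℕ) (hδ : condStar E δ)
    (d : Q0 → ℕ) (hd : ∀ i, 1 ≤ d i) :
    ∀ M : ℕ, ∃ N : ℕ, ∀ n ≥ N, ∀ k : ℕ, 2 ≤ k →
      ∀ ds : Fin k → Q0 → ℕ, (∀ a, ds a ≠ 0) →
        (∀ i, ∑ a, ds a i = d i + n * δ i) →
        (M : ℤ) ≤
          -∑ a : Fin k, ∑ b ∈ Finset.univ.filter (fun b => a < b),
            bform E (nvec (ds a)) (nvec (ds b)) := by
  intro M
  obtain ⟨N, hN⟩ := exists_le_neg_bform_of_add_eq E hsymm hoff δ hδ d hd M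
  refine ⟨N, fun n hn k hk ds hds hsum => ?_⟩
  refine le_neg_sum_sum_lt_of_le_neg_sum_erase (by simpa using hk)
    (fun a b => bform_comm hsymm _ _) (Int.natCast_nonneg M) fun a => ?_
  rw [← bform_nvec_sum_right]
  refine hN n hn _ _ (hds a) ?_ fun i => by
    rw [add_sum_erase _ (fun b => ds b i) (mem_univ a), hsum]
  obtain ⟨b, hba⟩ := Fintype.exists_ne_of_one_lt_card (by rw [Fintype.card_fin]; omega) a
  intro hzero
  refine hds b (funext fun i => ?_)
  have := congrFun hzero i
  simp only [Pi.zero_apply, sum_eq_zero_iff, mem_erase, mem_univ, and_true] at this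
  exact this b hba

/-- Corollary 3.3 (combinatorial content): for a symmetric quiver without loops, `δ`
satisfying (∗) and `d` of full support, the codimension `-Σ_{i<j} ⟨d^i, d^j⟩` of any
nontrivial HN stratum of `d + nδ` is at least `M` for all large `n`. -/
theorem codim_HN_strata_large
    {Q0 : Type*} [Fintype Q0] [DecidableEq Q0] [Nonempty Q0]
    (E : Q0 → Q0 → ℤ) (hsymm : ∀ i j, E i j = E j i)
    (hdiag : ∀ i, E i i = 1) (hoff : ∀ i j, i ≠ j → E i j ≤ 0)
    (δ : Q0 → ℕ) (hδ : condStar E δ)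
    (d : Q0 → ℕ) (hd : ∀ i, 1 ≤ d i) :
    ∀ M : ℕ, ∃ N : ℕ, ∀ n ≥ N, ∀ k : ℕ, 2 ≤ k →
      ∀ ds : Fin k → Q0 → ℕ, (∀ a, ds a ≠ 0) →
        (∀ i, ∑ a, ds a i = d i + n * δ i) →
        (M : ℤ) ≤
          -∑ a : Fin k, ∑ b ∈ Finset.univ.filter (fun b => a < b),
            bform E (nvec (ds a)) (nvec (ds b)) :=
  codim_HN_strata_large_general E hsymm hoff δ hδ d hd
end

section
/- Let Q0 be a finite type and let a, δ : Q0 → ℕ with δ i ≤ a i for every i and δ ≠ 0. Work in ℚ[[t]] and set φ_N(t) := ∏_{j=1}^N (1 − t^j). Then for every natural number j with j ≤ min_{i ∈ supp δ} (a i − δ i), the coefficient of t^j in ∏_{i ∈ Q0} φ_{a i}(t)^{−1} − ∏_{i ∈ Q0} φ_{a i − δ i}(t)^{−1} is zero; i.e., this difference of power series has order at least 1 + min_{i ∈ supp δ}(a i − δ i). -/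
/-!
Modulo `X ^ (j + 1)` every factor `1 - X ^ m` with `m > j` is `1`, so `φ_N ≡ φ_M` whenever
`j ≤ M ≤ N`. Congruences pass to inverses of units and to products, so the two products of inverses
are congruent modulo `X ^ (j + 1)`, factor by factor (trivially where `δ i = 0`).
-/

open Finset PowerSeries

/-- `φ_N(t) = ∏_{j=1}^N (1 - t^j)` in `ℚ[[t]]`. -/
noncomputable def phiQ (N : ℕ) : PowerSeries ℚ :=
  ∏ j ∈ Finset.Icc 1 N, (1 - PowerSeries.X ^ j)

namespace PowerSeries

theorem coeff_sub_eq_zero_of_sModEq {R : Type*} [CommRing R] {f g : R⟦X⟧} {n j : ℕ}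
    (h : f ≡ g [SMOD Ideal.span {(X : R⟦X⟧) ^ n}]) (hj : j < n) : coeff j (f - g) = 0 :=
  X_pow_dvd_iff.mp (Ideal.mem_span_singleton.mp (SModEq.sub_mem.mp h)) j hj

theorem one_sub_X_pow_sModEq_one {R : Type*} [CommRing R] {n m : ℕ} (h : n ≤ m) :
    1 - X ^ m ≡ 1 [SMOD Ideal.span {(X : R⟦X⟧) ^ n}] := by
  rw [SModEq.sub_mem, sub_sub_cancel_left, neg_mem_iff]
  exact Ideal.mem_span_singleton.mpr (pow_dvd_pow X h)

theorem inv_sModEq_inv {k : Type*} [Field k] {I : Ideal k⟦X⟧} {f g : k⟦X⟧}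
    (hf : constantCoeff f ≠ 0) (hg : constantCoeff g ≠ 0) (h : f ≡ g [SMOD I]) :
    f⁻¹ ≡ g⁻¹ [SMOD I] :=
  calc f⁻¹ = f⁻¹ * g * g⁻¹ := by rw [mul_assoc, g.mul_inv_cancel hg, mul_one]
    _ ≡ f⁻¹ * f * g⁻¹ [SMOD I] := (SModEq.rfl.mul h.symm).mul SModEq.rfl
    _ = g⁻¹ := by rw [f.inv_mul_cancel hf, one_mul]

end PowerSeries

theorem constantCoeff_phiQ (N : ℕ) : constantCoeff (phiQ N) = 1 := by
  rw [phiQ, map_prod]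
  refine prod_eq_one fun m hm => ?_
  simp [zero_pow (Nat.one_le_iff_ne_zero.mp (mem_Icc.mp hm).1)]

theorem phiQ_mul_prod_Ioc {M N : ℕ} (h : M ≤ N) :
    phiQ M * ∏ m ∈ Ioc M N, (1 - X ^ m) = phiQ N := by
  have hIcc (K : ℕ) : Icc 1 K = Ioc 0 K := Icc_add_one_left_eq_Ioc 0 K
  rw [phiQ, phiQ, hIcc, hIcc]
  exact prod_Ioc_consecutive _ M.zero_le h

theorem phiQ_sModEq_phiQ {n M N : ℕ} (hn : n ≤ M + 1) (h : M ≤ N) :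
    phiQ N ≡ phiQ M [SMOD Ideal.span {(X : ℚ⟦X⟧) ^ n}] :=
  calc phiQ N = phiQ M * ∏ m ∈ Ioc M N, (1 - X ^ m) := (phiQ_mul_prod_Ioc h).symm
    _ ≡ phiQ M * ∏ m ∈ Ioc M N, 1 [SMOD Ideal.span {(X : ℚ⟦X⟧) ^ n}] :=
      SModEq.rfl.mul <| SModEq.prod fun m hm =>
        one_sub_X_pow_sModEq_one (hn.trans (mem_Ioc.mp hm).1)
    _ = phiQ M := by rw [prod_const_one, mul_one]

theorem inv_phiQ_sModEq_inv_phiQ {n M N : ℕ} (hn : n ≤ M + 1) (h : M ≤ N) :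
    (phiQ N)⁻¹ ≡ (phiQ M)⁻¹ [SMOD Ideal.span {(X : ℚ⟦X⟧) ^ n}] :=
  inv_sModEq_inv (by simp [constantCoeff_phiQ]) (by simp [constantCoeff_phiQ])
    (phiQ_sModEq_phiQ hn h)

theorem coeff_sub_prod_inv_phi_eq_zero_general
    {Q0 : Type*} [Fintype Q0] (a δ : Q0 → ℕ)
    (j : ℕ) (hj : ∀ i, δ i ≠ 0 → j ≤ a i - δ i) :
    PowerSeries.coeff (R := ℚ) j
        ((∏ i : Q0, (phiQ (a i))⁻¹) - ∏ i : Q0, (phiQ (a i - δ i))⁻¹) = 0 := by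
  refine coeff_sub_eq_zero_of_sModEq (SModEq.prod fun i _ => ?_) j.lt_add_one
  rcases eq_or_ne (δ i) 0 with h | h
  · rw [h, Nat.sub_zero]
    exact SModEq.rfl
  · exact inv_phiQ_sModEq_inv_phiQ (Nat.succ_le_succ (hj i h)) (Nat.sub_le _ _)

/-- Order estimate: if `δ ≤ a` componentwise and `j ≤ a i - δ i` for every `i ∈ supp δ`,
then the coefficient of `t^j` in `∏_i φ_{a i}(t)⁻¹ - ∏_i φ_{a i - δ i}(t)⁻¹` vanishes. -/
theorem coeff_sub_prod_inv_phi_eq_zero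
    {Q0 : Type*} [Fintype Q0] (a δ : Q0 → ℕ)
    (hle : ∀ i, δ i ≤ a i) (hδ : δ ≠ 0)
    (j : ℕ) (hj : ∀ i, δ i ≠ 0 → j ≤ a i - δ i) :
    PowerSeries.coeff (R := ℚ) j
        ((∏ i : Q0, (phiQ (a i))⁻¹) - ∏ i : Q0, (phiQ (a i - δ i))⁻¹) = 0 :=
  coeff_sub_prod_inv_phi_eq_zero_general a δ j hj
end
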